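/- arXiv:2503.02496 — 2 statements merged into one kernel-verified Lean document; each statement's English description precedes it below -/
import Mathlib

section
/- The solution a(t) of the Riccati ODE a'(t) = -γσ²/2 + a(t)²/η with a(T) = K ≥ 0 satisfies 0 ≤ a(t) ≤ max(K, sqrt(γσ²η/2)) for all t ∈ [0,T]. In particular the solution does not blow up and exists globally on [0,T]. -/
open Real Set

/-- Any C¹ solution of the Riccati ODE `a' = -γσ²/2 + a²/η` with `a(T) = K ≥ 0` satisfies
`0 ≤ a(t) ≤ max K √(γσ²η/2)` on `[0,T]` (no blow-up, global existence on `[0,T]`). -/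
theorem stmt_2 (T γ σ η K : ℝ) (hT : 0 < T) (hγ : 0 < γ) (hσ : 0 < σ) (hη : 0 < η)
    (hK : 0 ≤ K) (a : ℝ → ℝ)
    (ha : ∀ t ∈ Icc 0 T, HasDerivAt a (-(γ * σ ^ 2) / 2 + (a t) ^ 2 / η) t)
    (haT : a T = K) :
    ∀ t ∈ Icc 0 T, 0 ≤ a t ∧ a t ≤ max K (Real.sqrt (γ * σ ^ 2 * η / 2)) := by
  set M := max K (Real.sqrt (γ * σ ^ 2 * η / 2)) with hM
  have hcη : 0 ≤ γ * σ ^ 2 * η / 2 := by positivity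
  have hMsq : γ * σ ^ 2 * η / 2 ≤ M ^ 2 := by
    calc γ * σ ^ 2 * η / 2 = Real.sqrt (γ * σ ^ 2 * η / 2) ^ 2 := (Real.sq_sqrt hcη).symm
    _ ≤ M ^ 2 := by
        have h1 : Real.sqrt (γ * σ ^ 2 * η / 2) ≤ M := le_max_right _ _
        have h0 : 0 ≤ Real.sqrt (γ * σ ^ 2 * η / 2) := Real.sqrt_nonneg _
        nlinarith
  have hKM : K ≤ M := le_max_left _ _
  have hM0 : 0 ≤ M := hK.trans hKM
  have hcont : ContinuousOn a (Icc 0 T) := fun t ht =>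
    (ha t ht).continuousAt.continuousWithinAt
  intro t₀ ht₀
  constructor
  · -- lower bound
    by_contra hneg
    push_neg at hneg
    have ht₀T : t₀ < T := by
      rcases lt_or_eq_of_le ht₀.2 with h | h
      · exact h
      · rw [h, haT] at hneg; linarith
    have hsub : Icc t₀ T ⊆ Icc 0 T := Icc_subset_Icc ht₀.1 le_rfl
    have hcont' : ContinuousOn a (Icc t₀ T) := hcont.mono hsub
    set Z := {t ∈ Icc t₀ T | a t = 0} with hZ
    have hZne' : Z.Nonempty := by
      obtain ⟨u, hu, hau⟩ := intermediate_value_Icc ht₀.2 hcont'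
        (show (0:ℝ) ∈ Icc (a t₀) (a T) from ⟨hneg.le, by rw [haT]; exact hK⟩)
      exact ⟨u, hu, hau⟩
    have hZclosed : IsClosed Z :=
      hcont'.preimage_isClosed_of_isClosed isClosed_Icc isClosed_singleton
    have hZbdd : BddBelow Z := ⟨t₀, fun z hz => hz.1.1⟩
    set u := sInf Z with hu
    have huZ : u ∈ Z := hZclosed.csInf_mem hZne' hZbdd
    have hau : a u = 0 := huZ.2
    have ht₀u : t₀ < u := by
      rcases lt_or_eq_of_le huZ.1.1 with h | h
      · exact h
      · exfalso; rw [h, hau] at hneg; linarith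
    have hIco : ∀ t ∈ Ico t₀ u, a t < 0 := by
      intro t ht
      by_contra hge
      push_neg at hge
      have hsub2 : Icc t₀ t ⊆ Icc t₀ T := Icc_subset_Icc le_rfl (ht.2.le.trans huZ.1.2)
      obtain ⟨v, hv, hav⟩ := intermediate_value_Icc ht.1 (hcont'.mono hsub2)
        (show (0:ℝ) ∈ Icc (a t₀) (a t) from ⟨hneg.le, hge⟩)
      have hvZ : v ∈ Z := ⟨hsub2 hv, hav⟩
      have := csInf_le hZbdd hvZ
      linarith [hv.2, ht.2]
    -- slope argument at u
    have hderiv : HasDerivAt a (-(γ * σ ^ 2) / 2 + (a u) ^ 2 / η) u := ha u (hsub huZ.1)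
    have hderiv' : HasDerivAt a (-(γ * σ ^ 2) / 2) u := by
      rwa [hau, zero_pow two_ne_zero, zero_div, add_zero] at hderiv
    have hslope := hasDerivAt_iff_tendsto_slope.mp hderiv'
    have hneg' : -(γ * σ ^ 2) / 2 < 0 := by
      have : 0 < γ * σ ^ 2 := by positivity
      linarith
    have hev : ∀ᶠ t in nhdsWithin u {u}ᶜ, slope a u t < 0 :=
      hslope (Iio_mem_nhds hneg')
    have hle : nhdsWithin u (Ioo t₀ u) ≤ nhdsWithin u {u}ᶜ :=
      nhdsWithin_mono _ (fun x hx => ne_of_lt hx.2)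
    have hne : (nhdsWithin u (Ioo t₀ u)).NeBot := by
      rw [nhdsWithin_Ioo_eq_nhdsLT ht₀u]
      exact nhdsLT_neBot u
    obtain ⟨t, hts, htI⟩ := ((hev.filter_mono hle).and self_mem_nhdsWithin).exists
    have htu : t < u := htI.2
    have hat : a t < 0 := hIco t ⟨htI.1.le, htu⟩
    rw [slope_def_field, div_neg_iff] at hts
    rcases hts with ⟨h1, h2⟩ | ⟨h1, h2⟩
    · linarith
    · rw [hau] at h1; linarith
  · -- upper bound
    by_contra hbig
    push_neg at hbig
    have ht₀T : t₀ < T := by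
      rcases lt_or_eq_of_le ht₀.2 with h | h
      · exact h
      · rw [h, haT] at hbig; linarith
    have hsub : Icc t₀ T ⊆ Icc 0 T := Icc_subset_Icc ht₀.1 le_rfl
    have hcont' : ContinuousOn a (Icc t₀ T) := hcont.mono hsub
    set Z := {t ∈ Icc t₀ T | a t = M} with hZ
    have hZne' : Z.Nonempty := by
      obtain ⟨u, hu, hau⟩ := intermediate_value_Icc' ht₀.2 hcont'
        (show M ∈ Icc (a T) (a t₀) from ⟨by rw [haT]; exact hKM, hbig.le⟩)
      exact ⟨u, hu, hau⟩
    have hZclosed : IsClosed Z :=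
      hcont'.preimage_isClosed_of_isClosed isClosed_Icc isClosed_singleton
    have hZbdd : BddBelow Z := ⟨t₀, fun z hz => hz.1.1⟩
    set u := sInf Z with hu
    have huZ : u ∈ Z := hZclosed.csInf_mem hZne' hZbdd
    have hau : a u = M := huZ.2
    have ht₀u : t₀ < u := by
      rcases lt_or_eq_of_le huZ.1.1 with h | h
      · exact h
      · exfalso; rw [h, hau] at hbig; linarith
    have hIco : ∀ t ∈ Ico t₀ u, M < a t := by
      intro t ht
      by_contra hge
      push_neg at hge
      have hsub2 : Icc t₀ t ⊆ Icc t₀ T := Icc_subset_Icc le_rfl (ht.2.le.trans huZ.1.2)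
      obtain ⟨v, hv, hav⟩ := intermediate_value_Icc' ht.1 (hcont'.mono hsub2)
        (show M ∈ Icc (a t) (a t₀) from ⟨hge, hbig.le⟩)
      have hvZ : v ∈ Z := ⟨hsub2 hv, hav⟩
      have := csInf_le hZbdd hvZ
      linarith [hv.2, ht.2]
    have hge : ∀ t ∈ Icc t₀ u, M ≤ a t := by
      intro t ht
      rcases lt_or_eq_of_le ht.2 with h | h
      · exact (hIco t ⟨ht.1, h⟩).le
      · rw [h, hau]
    -- a is monotone on [t₀, u] since a' ≥ 0 there
    have hsub3 : Icc t₀ u ⊆ Icc 0 T :=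
      (Icc_subset_Icc le_rfl huZ.1.2).trans hsub
    have hmono : MonotoneOn a (Icc t₀ u) := by
      apply monotoneOn_of_hasDerivWithinAt_nonneg (convex_Icc t₀ u)
        (hcont.mono hsub3) (f' := fun t => -(γ * σ ^ 2) / 2 + (a t) ^ 2 / η)
      · intro x hx
        exact ((ha x (hsub3 (interior_subset hx))).hasDerivWithinAt)
      · intro x hx
        rw [interior_Icc] at hx
        have hax : M ≤ a x := hge x ⟨hx.1.le, hx.2.le⟩
        have : γ * σ ^ 2 * η / 2 ≤ (a x) ^ 2 * 1 := by nlinarith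
        rw [div_add_div _ _ (two_ne_zero) (ne_of_gt hη)]
        apply div_nonneg _ (by positivity)
        nlinarith
    have := hmono ⟨le_rfl, ht₀u.le⟩ ⟨ht₀u.le, le_rfl⟩ ht₀u.le
    rw [hau] at this
    linarith
end

section
/- Suppose A : [0,T] → S₂(ℝ) (symmetric 2×2 real matrices) is C¹ and satisfies A'(t) = (1/η)·A(t)·M·A(t) - (γ/2)·Σ with A(T) = diag(K, 0), where M is the rank-one matrix with entries M₁₁ = 1, M₁₂ = M₂₁ = k, M₂₂ = k², and Σ is symmetric positive semidefinite. Then A(t) is positive semidefinite for all t ∈ [0,T]. -/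
/-! Write the equation on `[a, b]` as `A' = A N A - Q` with `N = M/η`, `Q = (γ/2)Σ ⪰ 0`, and
perturb to `A(t) + ε e^{b-t} I`, which is positive definite at the terminal time `b`. If it
failed to be positive definite somewhere, take the last such time `t₁`: there the perturbed
matrix is positive semidefinite with a unit null vector `x`, i.e. `A(t₁) x = -c x` with
`c = ε e^{b-t₁}`. Along `x` the derivative of the perturbed quadratic form is
`c² xᵀNx - xᵀQx - c |x|² < 0` for small `ε`, so the form is negative just after `t₁`,
a contradiction. Letting `ε → 0` gives `A(t) ⪰ 0`. -/

open Real Set Matrix Filter Topology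

theorem HasDerivAt.eventually_nhdsGT_lt {f : ℝ → ℝ} {f' t : ℝ} (hf : HasDerivAt f f' t)
    (hf' : f' < 0) : ∀ᶠ s in 𝓝[>] t, f s < f t := by
  filter_upwards [hf.hasDerivWithinAt.limsup_slope_le' (lt_irrefl t) hf', self_mem_nhdsWithin]
    with s hslope hts
  rw [slope_def_field, div_neg_iff] at hslope
  rcases hslope with ⟨-, h⟩ | ⟨h, -⟩
  · linarith [mem_Ioi.mp hts]
  · linarith

namespace Matrix

variable {n : Type*} {a b : ℝ}

theorem hasDerivAt_add_exp_smul_one_apply [DecidableEq n] {A : ℝ → Matrix n n ℝ}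
    {D : Matrix n n ℝ} {t : ℝ}
    (hA : ∀ i j, HasDerivAt (fun s => A s i j) (D i j) t) (ε : ℝ) (i j : n) :
    HasDerivAt (fun s => (A s + (ε * exp (b - s)) • 1) i j)
      ((D - (ε * exp (b - t)) • 1) i j) t := by
  have hexp : HasDerivAt (fun s => ε * exp (b - s)) (-(ε * exp (b - t))) t := by
    simpa using ((hasDerivAt_id t).const_sub b).exp.const_mul ε
  refine ((hA i j).fun_add (hexp.mul_const ((1 : Matrix n n ℝ) i j))).congr_deriv ?_
  simp only [Matrix.sub_apply, Matrix.smul_apply, smul_eq_mul]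
  ring

variable [Fintype n]

theorem dotProduct_mulVec_le_sum_abs_mul (N : Matrix n n ℝ) (v : n → ℝ) :
    v ⬝ᵥ N *ᵥ v ≤ (∑ i, ∑ j, |N i j|) * (v ⬝ᵥ v) := by
  have hsq : ∀ i, v i ^ 2 ≤ v ⬝ᵥ v := fun i => by
    simpa only [dotProduct, sq] using
      Finset.single_le_sum (fun j _ => mul_self_nonneg (v j)) (Finset.mem_univ i)
  have hprod : ∀ i j, |v i * v j| ≤ v ⬝ᵥ v := fun i j => by
    rw [abs_mul]
    nlinarith [hsq i, hsq j, sq_abs (v i), sq_abs (v j), sq_nonneg (|v i| - |v j|)]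
  calc v ⬝ᵥ N *ᵥ v = ∑ i, ∑ j, N i j * (v i * v j) := by
        simp only [dotProduct, mulVec, Finset.mul_sum]
        exact Finset.sum_congr rfl fun i _ => Finset.sum_congr rfl fun j _ => by ring
    _ ≤ ∑ i, ∑ j, |N i j| * (v ⬝ᵥ v) := by
        refine Finset.sum_le_sum fun i _ => Finset.sum_le_sum fun j _ => ?_
        exact (le_abs_self _).trans ((abs_mul _ _).trans_le
          (mul_le_mul_of_nonneg_left (hprod i j) (abs_nonneg _)))
    _ = (∑ i, ∑ j, |N i j|) * (v ⬝ᵥ v) := by simp only [Finset.sum_mul]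

theorem dotProduct_add_smul_one_mulVec [DecidableEq n] (P : Matrix n n ℝ) (c : ℝ) (x : n → ℝ) :
    x ⬝ᵥ (P + c • 1) *ᵥ x = x ⬝ᵥ P *ᵥ x + c * (x ⬝ᵥ x) := by
  rw [add_mulVec, smul_mulVec, one_mulVec, dotProduct_add, dotProduct_smul, smul_eq_mul]

theorem IsSymm.dotProduct_mul_mul_mulVec_of_mulVec_eq_smul {A : Matrix n n ℝ} (hA : A.IsSymm)
    (N : Matrix n n ℝ) {x : n → ℝ} {c : ℝ} (hx : A *ᵥ x = c • x) :
    x ⬝ᵥ (A * N * A) *ᵥ x = c ^ 2 * (x ⬝ᵥ N *ᵥ x) := by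
  have hx' : x ᵥ* A = c • x := by rw [← mulVec_transpose, hA.eq, hx]
  rw [← mulVec_mulVec, ← mulVec_mulVec, hx, dotProduct_mulVec, hx', mulVec_smul,
    smul_dotProduct, dotProduct_smul, smul_eq_mul, smul_eq_mul, sq, mul_assoc]

theorem posSemidef_of_forall_mem_sphere {P : Matrix n n ℝ} (hP : P.IsSymm)
    (h : ∀ x ∈ Metric.sphere (0 : n → ℝ) 1, 0 ≤ x ⬝ᵥ P *ᵥ x) : P.PosSemidef := by
  refine PosSemidef.of_dotProduct_mulVec_nonneg (isHermitian_iff_isSymm.mpr hP) fun x => ?_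
  rw [star_trivial]
  rcases eq_or_ne x 0 with rfl | hx
  · simp
  have hnorm : ‖x‖ ≠ 0 := norm_ne_zero_iff.mpr hx
  have hunit : ‖x‖⁻¹ • x ∈ Metric.sphere (0 : n → ℝ) 1 := by simp [norm_smul, hnorm]
  have := h _ hunit
  rw [mulVec_smul, smul_dotProduct, dotProduct_smul, smul_eq_mul, smul_eq_mul, ← mul_assoc]
    at this
  exact (mul_nonneg_iff_of_pos_left (by positivity)).mp this

theorem hasDerivAt_dotProduct_mulVec {A : ℝ → Matrix n n ℝ} {D : Matrix n n ℝ} {t : ℝ}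
    (hA : ∀ i j, HasDerivAt (fun s => A s i j) (D i j) t) (x y : n → ℝ) :
    HasDerivAt (fun s => x ⬝ᵥ A s *ᵥ y) (x ⬝ᵥ D *ᵥ y) t := by
  simp only [dotProduct, mulVec]
  exact HasDerivAt.fun_sum fun i _ =>
    (HasDerivAt.fun_sum fun j _ => (hA i j).mul_const (y j)).const_mul (x i)

theorem isCompact_setOf_exists_mem_sphere_dotProduct_mulVec_nonpos {P : ℝ → Matrix n n ℝ}
    {a b : ℝ} (hP : ContinuousOn P (Icc a b)) :
    IsCompact {t ∈ Icc a b | ∃ x ∈ Metric.sphere (0 : n → ℝ) 1, x ⬝ᵥ P t *ᵥ x ≤ 0} := by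
  have hq : ContinuousOn (fun p : ℝ × (n → ℝ) => p.2 ⬝ᵥ P p.1 *ᵥ p.2)
      (Icc a b ×ˢ Metric.sphere 0 1) :=
    (continuous_snd.dotProduct (continuous_fst.matrix_mulVec continuous_snd)).comp_continuousOn
      ((hP.comp continuousOn_fst fun _ hp => hp.1).prodMk continuousOn_snd)
  have hK := (isCompact_Icc.prod (isCompact_sphere 0 1)).of_isClosed_subset
    (hq.preimage_isClosed_of_isClosed (isClosed_Icc.prod Metric.isClosed_sphere)
      (isClosed_Iic (a := (0 : ℝ))))
    inter_subset_left
  convert hK.image continuous_fst using 1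
  ext t
  simp only [mem_ofPred_eq, mem_image, mem_inter_iff, mem_prod, mem_preimage, mem_Iic,
    Prod.exists, exists_and_right, exists_eq_right]
  tauto

theorem dotProduct_mulVec_pos_of_deriv_neg_on_ker {P D : ℝ → Matrix n n ℝ}
    (hsymm : ∀ t ∈ Icc a b, (P t).IsSymm)
    (hP : ∀ t ∈ Icc a b, ∀ i j, HasDerivAt (fun s => P s i j) (D t i j) t)
    (hb : ∀ x ∈ Metric.sphere (0 : n → ℝ) 1, 0 < x ⬝ᵥ P b *ᵥ x)
    (hD : ∀ t ∈ Icc a b, ∀ x ∈ Metric.sphere (0 : n → ℝ) 1,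
      (P t).PosSemidef → P t *ᵥ x = 0 → x ⬝ᵥ D t *ᵥ x < 0) :
    ∀ t ∈ Icc a b, ∀ x ∈ Metric.sphere (0 : n → ℝ) 1, 0 < x ⬝ᵥ P t *ᵥ x := by
  by_contra! hbad
  obtain ⟨t₁, ⟨ht₁, x, hx, hqx⟩, hmax⟩ :=
    (isCompact_setOf_exists_mem_sphere_dotProduct_mulVec_nonpos
      (continuousOn_pi.mpr fun i => continuousOn_pi.mpr fun j => fun t ht =>
        (hP t ht i j).continuousAt.continuousWithinAt)).exists_isGreatest hbad
  have hpos : ∀ t ∈ Ioc t₁ b, ∀ y ∈ Metric.sphere (0 : n → ℝ) 1, 0 < y ⬝ᵥ P t *ᵥ y := by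
    intro t ht y hy
    by_contra! hy'
    exact (hmax ⟨⟨ht₁.1.trans ht.1.le, ht.2⟩, y, hy, hy'⟩).not_gt ht.1
  have ht₁b : t₁ < b := ht₁.2.lt_of_ne fun h => (hb x hx).not_ge (h ▸ hqx)
  have hPt₁ : (P t₁).PosSemidef := by
    refine posSemidef_of_forall_mem_sphere (hsymm t₁ ht₁) fun y hy => ge_of_tendsto
      (((hasDerivAt_dotProduct_mulVec (hP t₁ ht₁) y y).continuousAt.tendsto).mono_left
        (nhdsWithin_le_nhds (s := Ioi t₁))) ?_
    filter_upwards [Ioc_mem_nhdsGT ht₁b] with t ht using (hpos t ht y hy).le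
  have hker : P t₁ *ᵥ x = 0 := by
    refine (hPt₁.dotProduct_mulVec_zero_iff x).mp ?_
    rw [star_trivial]
    exact le_antisymm hqx (by simpa using hPt₁.dotProduct_mulVec_nonneg x)
  obtain ⟨t, hlt, ht⟩ := ((hasDerivAt_dotProduct_mulVec (hP t₁ ht₁) x x).eventually_nhdsGT_lt
    (hD t₁ ht₁ x hx hPt₁ hker)).and (Ioc_mem_nhdsGT ht₁b) |>.exists
  exact (hpos t ht x hx).not_ge (hlt.le.trans hqx)

variable [DecidableEq n]

theorem riccati_dotProduct_mulVec_neg_of_mulVec_eq_neg_smul {A N Q : Matrix n n ℝ}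
    (hA : A.IsSymm) (hQ : Q.PosSemidef) {c : ℝ} (hc : 0 < c) (hcN : c * ∑ i, ∑ j, |N i j| < 1)
    {x : n → ℝ} (hx : x ≠ 0) (hAx : A *ᵥ x = (-c) • x) :
    x ⬝ᵥ (A * N * A - Q - c • 1) *ᵥ x < 0 := by
  rw [sub_eq_add_neg, ← neg_smul, dotProduct_add_smul_one_mulVec, sub_mulVec, dotProduct_sub,
    hA.dotProduct_mul_mul_mulVec_of_mulVec_eq_smul N hAx, neg_sq]
  have hN := dotProduct_mulVec_le_sum_abs_mul N x
  have hQx : 0 ≤ x ⬝ᵥ Q *ᵥ x := by simpa using hQ.dotProduct_mulVec_nonneg x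
  have hx0 : 0 < x ⬝ᵥ x := by simpa using dotProduct_star_self_pos_iff.mpr hx
  nlinarith [mul_le_mul_of_nonneg_left hN (sq_nonneg c),
    mul_lt_mul_of_pos_right hcN (mul_pos hc hx0)]

variable {N Q : Matrix n n ℝ} {A : ℝ → Matrix n n ℝ}

theorem riccati_dotProduct_add_exp_smul_one_mulVec_pos (hQ : Q.PosSemidef)
    (hsymm : ∀ t ∈ Icc a b, (A t).IsSymm)
    (hA : ∀ t ∈ Icc a b, ∀ i j, HasDerivAt (fun s => A s i j) ((A t * N * A t - Q) i j) t)
    (hAb : (A b).PosSemidef) {ε : ℝ} (hε : 0 < ε)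
    (hεN : ε * exp (b - a) * ∑ i, ∑ j, |N i j| < 1) :
    ∀ t ∈ Icc a b, ∀ x ∈ Metric.sphere (0 : n → ℝ) 1,
      0 < x ⬝ᵥ (A t + (ε * exp (b - t)) • 1) *ᵥ x := by
  refine dotProduct_mulVec_pos_of_deriv_neg_on_ker
    (fun t ht => (hsymm t ht).add (isSymm_one.smul _))
    (fun t ht => hasDerivAt_add_exp_smul_one_apply (hA t ht) ε) (fun x hx => ?_)
    (fun t ht x hx _ hker => ?_)
  · have hx0 : 0 < x ⬝ᵥ x := by
      simpa using dotProduct_star_self_pos_iff.mpr (ne_zero_of_mem_sphere one_ne_zero ⟨x, hx⟩)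
    have hAx : 0 ≤ x ⬝ᵥ A b *ᵥ x := by simpa using hAb.dotProduct_mulVec_nonneg x
    rw [sub_self, exp_zero, mul_one, dotProduct_add_smul_one_mulVec]
    positivity
  · refine riccati_dotProduct_mulVec_neg_of_mulVec_eq_neg_smul (hsymm t ht) hQ (by positivity)
      ((mul_le_mul_of_nonneg_right ?_ ?_).trans_lt hεN)
      (ne_zero_of_mem_sphere one_ne_zero ⟨x, hx⟩) ?_
    · exact mul_le_mul_of_nonneg_left (exp_le_exp.mpr (by linarith [ht.1])) hε.le
    · exact Finset.sum_nonneg fun i _ => Finset.sum_nonneg fun j _ => abs_nonneg _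
    · rwa [add_mulVec, smul_mulVec, one_mulVec, add_eq_zero_iff_eq_neg, ← neg_smul] at hker

theorem riccati_posSemidef (hQ : Q.PosSemidef) (hsymm : ∀ t ∈ Icc a b, (A t).IsSymm)
    (hA : ∀ t ∈ Icc a b, ∀ i j, HasDerivAt (fun s => A s i j) ((A t * N * A t - Q) i j) t)
    (hAb : (A b).PosSemidef) : ∀ t ∈ Icc a b, (A t).PosSemidef := by
  intro t ht
  refine posSemidef_of_forall_mem_sphere (hsymm t ht) fun x hx => ?_
  have hlim : Tendsto (fun ε => x ⬝ᵥ (A t + (ε * exp (b - t)) • 1) *ᵥ x) (𝓝[>] 0)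
      (𝓝 (x ⬝ᵥ A t *ᵥ x)) := by
    simp only [dotProduct_add_smul_one_mulVec]
    have : Continuous fun ε : ℝ => x ⬝ᵥ A t *ᵥ x + ε * exp (b - t) * (x ⬝ᵥ x) := by fun_prop
    simpa using (this.tendsto 0).mono_left nhdsWithin_le_nhds
  have hsmall : ∀ᶠ ε in 𝓝[>] 0, ε * exp (b - a) * ∑ i, ∑ j, |N i j| < 1 := by
    have : Continuous fun ε : ℝ => ε * exp (b - a) * ∑ i, ∑ j, |N i j| := by fun_prop
    exact nhdsWithin_le_nhds (this.tendsto 0 |>.eventually (gt_mem_nhds (by simp)))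
  refine ge_of_tendsto hlim ?_
  filter_upwards [self_mem_nhdsWithin, hsmall] with ε hε hεN
  exact (riccati_dotProduct_add_exp_smul_one_mulVec_pos hQ hsymm hA hAb hε hεN t ht x hx).le

end Matrix

theorem stmt_7_general (T η γ K : ℝ) (hγ : 0 ≤ γ) (hK : 0 ≤ K)
    (M Sig : Matrix (Fin 2) (Fin 2) ℝ)
    (hSigpsd : Sig.PosSemidef)
    (A : ℝ → Matrix (Fin 2) (Fin 2) ℝ)
    (hAsymm : ∀ t ∈ Icc 0 T, (A t).IsSymm)
    (hA : ∀ t ∈ Icc 0 T, ∀ i j, HasDerivAt (fun s => A s i j)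
      (((1 / η) • (A t * M * A t) - (γ / 2) • Sig) i j) t)
    (hAT : A T = !![K, 0; 0, 0]) :
    ∀ t ∈ Icc 0 T, (A t).PosSemidef := by
  have hAT_diag : A T = diagonal ![K, 0] := by
    rw [hAT]
    ext i j
    fin_cases i <;> fin_cases j <;> rfl
  refine riccati_posSemidef (N := (1 / η) • M) (hSigpsd.smul (by positivity : 0 ≤ γ / 2))
    hAsymm (fun t ht i j => ?_) ?_
  · simpa only [Matrix.mul_smul, Matrix.smul_mul] using hA t ht i j
  · rw [hAT_diag]
    exact PosSemidef.diagonal fun i => by fin_cases i <;> simp [hK]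

/-- A C¹ solution of the matrix Riccati equation `A' = (1/η)AMA - (γ/2)Σ`,
`A(T) = diag(K,0)`, with `M = (1,k)ᵀ(1,k)` and `Σ ⪰ 0`, stays positive semidefinite
on `[0,T]`. -/
theorem stmt_7 (T η γ k K σ ν ρ : ℝ) (hT : 0 < T) (hη : 0 < η) (hγ : 0 ≤ γ)
    (hk : 0 ≤ k) (hK : 0 ≤ K) (hσ : 0 < σ) (hν : 0 ≤ ν) (hρ : ρ ∈ Icc (-1 : ℝ) 1)
    (M Sig : Matrix (Fin 2) (Fin 2) ℝ)
    (hM : M = !![1, k; k, k ^ 2])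
    (hSig : Sig = !![σ ^ 2, ρ * σ * ν; ρ * σ * ν, ν ^ 2])
    (hSigpsd : Sig.PosSemidef)
    (A : ℝ → Matrix (Fin 2) (Fin 2) ℝ)
    (hAsymm : ∀ t ∈ Icc 0 T, (A t).IsSymm)
    (hA : ∀ t ∈ Icc 0 T, ∀ i j, HasDerivAt (fun s => A s i j)
      (((1 / η) • (A t * M * A t) - (γ / 2) • Sig) i j) t)
    (hAT : A T = !![K, 0; 0, 0]) :
    ∀ t ∈ Icc 0 T, (A t).PosSemidef :=
  stmt_7_general T η γ K hγ hK M Sig hSigpsd A hAsymm hA hAT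
end
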